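/- Let Γ be a cancellation monoid with neutral element e and let A = ⊕_{γ∈Γ} A_γ be a Γ-graded ring. Then the degree-e part A_e is a local ring in the classical sense if and only if the two-sided ideal 𝔐 of A generated by all non-invertible homogeneous elements of A is a proper ideal of A. -/

import Mathlib

/-!
If `A₀` is local, a homogeneous `x ∈ A_i` with a homogeneous right inverse `y ∈ A_j`,
`i + j = 0`, is invertible: `y * x` is an idempotent of `A₀`, hence `0` or `1`, and it cannot be
`0` since `x = x * (y * x)`. So a product `x * s * y` of homogeneous elements landing in degree
`0` is a unit of `A₀` only if `s` is a unit of `A`. As the nonunits of `A₀` are closed under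
addition, the elements `z` all of whose two-sided multiples `x * z * y` have a nonunit degree-`0`
component form a proper two-sided ideal containing every non-invertible homogeneous element.
Conversely, the nonunits of `A₀` are non-invertible homogeneous elements of `A` (or zero), so two
of them cannot sum to `1` when `𝔐` is proper.
-/

open DirectSum

theorem IsIdempotentElem.eq_zero_or_eq_one_of_isLocalRing {R : Type*} [Ring R] [IsLocalRing R]
    {e : R} (he : IsIdempotentElem e) : e = 0 ∨ e = 1 := by
  rcases IsLocalRing.isUnit_or_isUnit_of_add_one (add_sub_cancel e 1) with hu | hu
  · exact Or.inr ((IsIdempotentElem.iff_eq_one_of_isUnit hu).mp he)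
  · exact Or.inl (hu.mul_right_eq_zero.mp he.one_sub_mul_self)

namespace GradedRing

variable {ι A σ : Type*} [DecidableEq ι] [AddMonoid ι] [Ring A] [SetLike σ A]
  [AddSubgroupClass σ A] (𝒜 : ι → σ) [GradedRing 𝒜]

theorem decompose_one_zero : decompose 𝒜 (1 : A) 0 = 1 :=
  Subtype.ext (decompose_of_mem_same 𝒜 (SetLike.one_mem_graded 𝒜))

theorem isUnit_coe_iff {a : 𝒜 0} : IsUnit (a : A) ↔ IsUnit a := by
  refine ⟨fun h => ?_, fun h => ?_⟩
  · obtain ⟨b, hab, hba⟩ := isUnit_iff_exists.mp h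
    refine isUnit_iff_exists.mpr ⟨decompose 𝒜 b 0, Subtype.ext ?_, Subtype.ext ?_⟩
    · rw [SetLike.GradeZero.coe_mul, ← coe_decompose_mul_of_left_mem_zero 𝒜 a.2, hab,
        decompose_one_zero, SetLike.GradeZero.coe_one]
    · rw [SetLike.GradeZero.coe_mul, ← coe_decompose_mul_of_right_mem_zero 𝒜 a.2, hba,
        decompose_one_zero, SetLike.GradeZero.coe_one]
  · obtain ⟨b, hab, hba⟩ := isUnit_iff_exists.mp h
    exact isUnit_iff_exists.mpr ⟨b, congrArg Subtype.val hab, congrArg Subtype.val hba⟩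

section IsLocalRing

variable [IsLocalRing (𝒜 0)]

theorem not_isUnit_decompose_add {a b : A} (ha : ¬IsUnit (decompose 𝒜 a 0))
    (hb : ¬IsUnit (decompose 𝒜 b 0)) : ¬IsUnit (decompose 𝒜 (a + b) 0) := by
  rw [decompose_add, DirectSum.add_apply]
  exact IsLocalRing.nonunits_add ha hb

def nonunitIdeal : TwoSidedIdeal A :=
  .mk' {z | ∀ x y, ¬IsUnit (decompose 𝒜 (x * z * y) 0)}
    (fun _ _ => by simp)
    (fun hz hz' x y => by
      rw [mul_add, add_mul]
      exact not_isUnit_decompose_add 𝒜 (hz x y) (hz' x y))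
    (fun hz x y => by
      rw [mul_neg, neg_mul, decompose_neg, DFinsupp.neg_apply, IsUnit.neg_iff]
      exact hz x y)
    (fun {a _} hz x y => by rw [← mul_assoc x]; exact hz (x * a) y)
    (fun {z a} hz x y => by rw [← mul_assoc x z a, mul_assoc _ a]; exact hz x (a * y))

theorem mem_nonunitIdeal_iff {z : A} :
    z ∈ nonunitIdeal 𝒜 ↔ ∀ x y, ¬IsUnit (decompose 𝒜 (x * z * y) 0) :=
  TwoSidedIdeal.mem_mk' ..

theorem nonunitIdeal_ne_top : nonunitIdeal 𝒜 ≠ ⊤ := by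
  rw [Ne, ← TwoSidedIdeal.one_mem_iff, mem_nonunitIdeal_iff]
  intro h
  apply h 1 1
  rw [mul_one, mul_one, decompose_one_zero]
  exact isUnit_one

variable [IsDedekindFiniteAddMonoid ι]

theorem mul_eq_one_symm_of_mem {i j : ι} {x y : A} (hx : x ∈ 𝒜 i) (hy : y ∈ 𝒜 j)
    (hij : i + j = 0) (h : x * y = 1) : y * x = 1 := by
  have hyx : y * x ∈ 𝒜 0 := add_eq_zero_symm hij ▸ SetLike.mul_mem_graded hy hx
  have he : IsIdempotentElem (⟨y * x, hyx⟩ : 𝒜 0) := Subtype.ext <| by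
    change y * x * (y * x) = y * x
    rw [mul_assoc, ← mul_assoc x, h, one_mul]
  rcases he.eq_zero_or_eq_one_of_isLocalRing with h0 | h1
  · have hyx0 : y * x = 0 := congrArg Subtype.val h0
    have hx0 : x = 0 := by rw [← one_mul x, ← h, mul_assoc, hyx0, mul_zero]
    have h10 : (1 : A) = 0 := by rw [← h, hx0, zero_mul]
    exact absurd (Subtype.ext h10 : (1 : 𝒜 0) = 0) one_ne_zero
  · exact congrArg Subtype.val h1

theorem isUnit_of_mul_mul_eq_one_of_mem {i j k : ι} {x s y : A} (hx : x ∈ 𝒜 i)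
    (hs : s ∈ 𝒜 k) (hy : y ∈ 𝒜 j) (hd : i + k + j = 0) (h : x * s * y = 1) : IsUnit s := by
  have hsyx : s * y * x = 1 := by
    refine mul_eq_one_symm_of_mem 𝒜 hx (SetLike.mul_mem_graded hs hy) ?_ (by rwa [← mul_assoc])
    rwa [← add_assoc]
  have hs_right : s * (y * x) = 1 := by rwa [← mul_assoc]
  have hs_left : y * x * s = 1 := by
    refine mul_eq_one_symm_of_mem 𝒜 hs (SetLike.mul_mem_graded hy hx) ?_ hs_right
    rw [← add_assoc]
    exact add_eq_zero_symm (by rwa [add_assoc] at hd)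
  exact isUnit_iff_exists.mpr ⟨_, hs_right, hs_left⟩

theorem mem_nonunitIdeal_of_mem {k : ι} {s : A} (hs : s ∈ 𝒜 k) (hns : ¬IsUnit s) :
    s ∈ nonunitIdeal 𝒜 := by
  rw [mem_nonunitIdeal_iff]
  intro x y
  induction x using DirectSum.Decomposition.inductionOn 𝒜 with
  | zero => simp
  | add x x' hx hx' => rw [add_mul, add_mul]; exact not_isUnit_decompose_add 𝒜 hx hx'
  | @homogeneous i x =>
  induction y using DirectSum.Decomposition.inductionOn 𝒜 with
  | zero => simp
  | add y y' hy hy' => rw [mul_add]; exact not_isUnit_decompose_add 𝒜 hy hy'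
  | @homogeneous j y =>
  have hxsy := SetLike.mul_mem_graded (SetLike.mul_mem_graded x.2 hs) y.2
  by_cases hd : i + k + j = 0
  · rw [hd] at hxsy
    rw [show decompose 𝒜 (x * s * y) 0 = ⟨_, hxsy⟩ from
      Subtype.ext (decompose_of_mem_same 𝒜 hxsy)]
    intro hu
    obtain ⟨w, hw, -⟩ := isUnit_iff_exists.mp hu
    refine hns (isUnit_of_mul_mul_eq_one_of_mem 𝒜 x.2 hs
      (add_zero j ▸ SetLike.mul_mem_graded y.2 w.2) hd ?_)
    rw [← mul_assoc]
    exact congrArg Subtype.val hw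
  · rw [show decompose 𝒜 (x * s * y) 0 = 0 from Subtype.ext (decompose_of_mem_ne 𝒜 hxsy hd)]
    exact not_isUnit_zero

end IsLocalRing

end GradedRing

theorem degree_zero_part_isLocalRing_iff_span_nonunit_homogeneous_ne_top
    {Γ : Type*} [AddCancelMonoid Γ] [DecidableEq Γ]
    {A : Type*} [Ring A] (𝒜 : Γ → AddSubgroup A) [GradedRing 𝒜] :
    IsLocalRing (𝒜 0) ↔
      TwoSidedIdeal.span {a : A | (a ≠ 0 ∧ ∃ γ, a ∈ 𝒜 γ) ∧ ¬IsUnit a} ≠ ⊤ := by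
  set 𝔐 := TwoSidedIdeal.span {a : A | (a ≠ 0 ∧ ∃ γ, a ∈ 𝒜 γ) ∧ ¬IsUnit a}
  constructor
  · intro _
    refine ne_top_of_le_ne_top (GradedRing.nonunitIdeal_ne_top 𝒜) (TwoSidedIdeal.span_le.mpr ?_)
    rintro s ⟨⟨-, k, hs⟩, hns⟩
    exact GradedRing.mem_nonunitIdeal_of_mem 𝒜 hs hns
  · intro h𝔐
    have mem_𝔐 (c : 𝒜 0) (hc : ¬IsUnit c) : (c : A) ∈ 𝔐 := by
      by_cases hc0 : (c : A) = 0
      · exact hc0 ▸ 𝔐.zero_mem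
      · exact TwoSidedIdeal.subset_span ⟨⟨hc0, 0, c.2⟩, (GradedRing.isUnit_coe_iff 𝒜).not.mpr hc⟩
    have : Nontrivial (𝒜 0) := by
      refine ⟨⟨0, 1, fun h01 => h𝔐 ((TwoSidedIdeal.one_mem_iff 𝔐).mp ?_)⟩⟩
      rw [← SetLike.GradeZero.coe_one (A := 𝒜), ← h01]
      exact 𝔐.zero_mem
    refine ⟨fun {a b} hab => by_contra fun hab' => h𝔐 ((TwoSidedIdeal.one_mem_iff 𝔐).mp ?_)⟩
    obtain ⟨ha, hb⟩ := not_or.mp hab'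
    rw [← SetLike.GradeZero.coe_one (A := 𝒜), ← hab]
    exact 𝔐.add_mem (mem_𝔐 a ha) (mem_𝔐 b hb)
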